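/- arXiv:2401.13021 — 2 statements merged into one kernel-verified Lean document; each statement's English description precedes it below -/
import Mathlib

section
/- Let f be a function continuous on the closed unit disk in ℂ and holomorphic on the open unit disk, such that f maps the boundary circle into the nonnegative real axis [0,∞). Then f is constant. -/
/-!
On the boundary circle `f` is real, so the maximum principle applied to `exp (∓ I * f)` shows
that `Im f` vanishes on the whole closed disk. A holomorphic function with constant
imaginary part on a connected open set is constant (open mapping theorem), and continuity carries
this to the closed disk.
-/

open Metric Set Bornology

namespace Complex

variable {E : Type*} [NormedAddCommGroup E] [NormedSpace ℂ E] [Nontrivial E] {f : E → ℂ}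
  {U : Set E}

theorem re_le_of_forall_mem_frontier_re_le (hU : IsBounded U) (hf : DiffContOnCl ℂ f U) {C : ℝ}
    (hC : ∀ z ∈ frontier U, (f z).re ≤ C) {z : E} (hz : z ∈ closure U) : (f z).re ≤ C := by
  have hexp : ∀ w ∈ frontier U, ‖(exp ∘ f) w‖ ≤ Real.exp C := fun w hw => by
    simpa only [Function.comp_apply, norm_exp, Real.exp_le_exp] using hC w hw
  simpa only [Function.comp_apply, norm_exp, Real.exp_le_exp] using
    norm_le_of_forall_mem_frontier_norm_le hU (differentiable_exp.comp_diffContOnCl hf) hexp hz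

theorem im_eq_of_forall_mem_frontier_im_eq (hU : IsBounded U) (hf : DiffContOnCl ℂ f U) {c : ℝ}
    (hc : ∀ z ∈ frontier U, (f z).im = c) {z : E} (hz : z ∈ closure U) : (f z).im = c := by
  have hle := re_le_of_forall_mem_frontier_re_le hU (hf.const_smul (-I)) (C := c)
    (fun w hw => by simp [hc w hw]) hz
  have hge := re_le_of_forall_mem_frontier_re_le hU (hf.const_smul I) (C := -c)
    (fun w hw => by simp [hc w hw]) hz
  simp only [Pi.smul_apply, smul_eq_mul, mul_re, neg_re, I_re, neg_im, I_im] at hle hge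
  linarith

end Complex

theorem DiffContOnCl.exists_forall_closure_eq_of_im_eq_on_frontier {f : ℂ → ℂ} {U : Set ℂ}
    (hf : DiffContOnCl ℂ f U) (hUb : IsBounded U) (hUo : IsOpen U) (hUc : IsConnected U) {c₀ : ℝ}
    (hc₀ : ∀ z ∈ frontier U, (f z).im = c₀) : ∃ c, ∀ z ∈ closure U, f z = c := by
  have him : ∀ z ∈ U, (f z).im = c₀ := fun z hz =>
    Complex.im_eq_of_forall_mem_frontier_im_eq hUb hf hc₀ (subset_closure hz)
  obtain ⟨c, hc⟩ :=
    (hf.differentiableOn.analyticOnNhd hUo).eq_const_of_im_eq_const him hUo hUc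
  exact ⟨c, fun z hz => EqOn.of_subset_closure hc hf.continuousOn continuousOn_const
    subset_closure Subset.rfl hz⟩

/-- A function continuous on the closed unit disk, holomorphic on the open unit disk,
mapping the boundary circle into `[0,∞) ⊂ ℝ ⊂ ℂ`, is constant on the closed disk. -/
theorem boundary_nonneg_real_implies_constant (f : ℂ → ℂ)
    (hc : ContinuousOn f (Metric.closedBall 0 1))
    (hd : DifferentiableOn ℂ f (Metric.ball 0 1))
    (hb : ∀ z : ℂ, ‖z‖ = 1 → ∃ r : ℝ, 0 ≤ r ∧ f z = r) :
    ∀ z ∈ Metric.closedBall (0:ℂ) 1, ∀ w ∈ Metric.closedBall (0:ℂ) 1, f z = f w := by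
  have hf : DiffContOnCl ℂ f (ball (0:ℂ) 1) := ⟨hd, by rwa [closure_ball 0 one_ne_zero]⟩
  have him : ∀ z ∈ frontier (ball (0:ℂ) 1), (f z).im = 0 := fun z hz => by
    rw [frontier_ball 0 one_ne_zero, mem_sphere_zero_iff_norm] at hz
    obtain ⟨r, -, hr⟩ := hb z hz
    simp [hr]
  obtain ⟨c, hfc⟩ := hf.exists_forall_closure_eq_of_im_eq_on_frontier isBounded_ball isOpen_ball
    ((convex_ball 0 1).isConnected (nonempty_ball.2 one_pos)) him
  rw [closure_ball 0 one_ne_zero] at hfc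
  intro z hz w hw
  rw [hfc z hz, hfc w hw]
end

section
/- Let f be continuous on the closed unit disk, holomorphic on the open unit disk, with |f(z)| = 1 for all z on the boundary circle. Then f is a finite Blaschke product: there exist an integer d ≥ 0, a constant c with |c| = 1, and points a₁, …, a_d in the open unit disk such that f(z) = c·∏_{i=1}^{d} (z − aᵢ)/(1 − \overline{aᵢ}·z) for all z in the closed disk. -/
/-!
Every zero of `f` in the closed disk lies in the open disk, since `|f| = 1` on the circle, and
there are finitely many of them, counted with multiplicity: otherwise the identity theorem would
make `f` vanish identically. Dividing `f` by the Blaschke factor of one of its zeros `a` gives a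
function with the same three properties (a Blaschke factor is unimodular on the circle) and one
zero fewer. When no zeros are left, the maximum modulus principle applied to `f` and `1 / f`
gives `|f| = 1` on the whole disk, so `f` is a unimodular constant.
-/

open Metric Filter Topology

noncomputable def blaschkeFactor (a z : ℂ) : ℂ := (z - a) / (1 - starRingEnd ℂ a * z)

def IsFiniteBlaschke (f : ℂ → ℂ) : Prop :=
  ∃ (d : ℕ) (c : ℂ) (a : Fin d → ℂ), ‖c‖ = 1 ∧ (∀ i, ‖a i‖ < 1) ∧
    ∀ z ∈ closedBall (0 : ℂ) 1, f z = c * ∏ i, blaschkeFactor (a i) z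

theorem IsFiniteBlaschke.of_blaschkeFactor_mul {f g : ℂ → ℂ} {a : ℂ}
    (hg : IsFiniteBlaschke g) (ha : ‖a‖ < 1)
    (hfg : ∀ z ∈ closedBall (0 : ℂ) 1, f z = g z * blaschkeFactor a z) :
    IsFiniteBlaschke f := by
  obtain ⟨d, c, b, hc, hb, hgb⟩ := hg
  refine ⟨d + 1, c, Fin.cons a b, hc, Fin.cases ha hb, fun z hz => ?_⟩
  rw [hfg z hz, hgb z hz, Fin.prod_univ_succ]
  simp only [Fin.cons_zero, Fin.cons_succ]
  ring

theorem one_sub_conj_mul_ne_zero {a z : ℂ} (ha : ‖a‖ < 1) (hz : ‖z‖ ≤ 1) :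
    1 - starRingEnd ℂ a * z ≠ 0 := by
  intro h
  have hlt : ‖starRingEnd ℂ a * z‖ < 1 := by
    rw [norm_mul, Complex.norm_conj]
    exact mul_lt_one_of_nonneg_of_lt_one_left (norm_nonneg a) ha hz
  rw [← sub_eq_zero.mp h, norm_one] at hlt
  exact hlt.false

theorem norm_one_sub_conj_mul_eq_norm_sub {a z : ℂ} (hz : ‖z‖ = 1) :
    ‖1 - starRingEnd ℂ a * z‖ = ‖z - a‖ := by
  have : 1 - starRingEnd ℂ a * z = starRingEnd ℂ (z - a) * z := by
    rw [map_sub, sub_mul, Complex.conj_mul', hz]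
    push_cast
    ring
  rw [this, norm_mul, hz, mul_one, Complex.norm_conj]

theorem analyticOrderNatAt_eq_add_of_mul_eq {𝕜 : Type*} [NontriviallyNormedField 𝕜]
    {f g u v : 𝕜 → 𝕜} {b : 𝕜} (hf : AnalyticAt 𝕜 f b) (hg : AnalyticAt 𝕜 g b)
    (hu : AnalyticAt 𝕜 u b) (hv : AnalyticAt 𝕜 v b) (hub : u b ≠ 0)
    (hfin : analyticOrderAt f b ≠ ⊤) (h : u * f = v * g) :
    analyticOrderNatAt f b = analyticOrderNatAt v b + analyticOrderNatAt g b := by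
  have hord := congrArg (analyticOrderAt · b) h
  simp only [analyticOrderAt_mul hu hf, analyticOrderAt_mul hv hg,
    hu.analyticOrderAt_eq_zero.2 hub, zero_add] at hord
  rw [hord] at hfin
  obtain ⟨hvfin, hgfin⟩ := WithTop.add_ne_top.mp hfin
  simp only [analyticOrderNatAt, hord, ENat.toNat_add hvfin hgfin]

theorem sum_analyticOrderNatAt_sub_const {𝕜 : Type*} [NontriviallyNormedField 𝕜] {a : 𝕜}
    {s : Finset 𝕜} (has : a ∈ s) : ∑ b ∈ s, analyticOrderNatAt (· - a) b = 1 := by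
  rw [Finset.sum_eq_single_of_mem a has fun b _ hb => by simp [analyticOrderNatAt, hb]]
  simp [analyticOrderNatAt]

/-- `f / blaschkeFactor a`, written via `dslope` so that it stays holomorphic at a zero `a`. -/
noncomputable def blaschkeQuotient (f : ℂ → ℂ) (a : ℂ) : ℂ → ℂ :=
  fun z => (1 - starRingEnd ℂ a * z) * dslope f a z

theorem one_sub_conj_mul_mul_eq_sub_mul_blaschkeQuotient {f : ℂ → ℂ} {a : ℂ} (hfa : f a = 0)
    (z : ℂ) : (1 - starRingEnd ℂ a * z) * f z = (z - a) * blaschkeQuotient f a z := by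
  have h := sub_smul_dslope f a z
  rw [smul_eq_mul, hfa, sub_zero] at h
  rw [blaschkeQuotient, ← h]
  ring

theorem eq_blaschkeQuotient_mul_blaschkeFactor {f : ℂ → ℂ} {a z : ℂ} (hfa : f a = 0)
    (ha : ‖a‖ < 1) (hz : z ∈ closedBall (0 : ℂ) 1) :
    f z = blaschkeQuotient f a z * blaschkeFactor a z := by
  have hden := one_sub_conj_mul_ne_zero ha (mem_closedBall_zero_iff.mp hz)
  rw [blaschkeFactor, mul_div_assoc', eq_div_iff hden, mul_comm,
    one_sub_conj_mul_mul_eq_sub_mul_blaschkeQuotient hfa, mul_comm]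

structure IsInnerInDiskAlgebra (f : ℂ → ℂ) : Prop where
  continuousOn : ContinuousOn f (closedBall 0 1)
  differentiableOn : DifferentiableOn ℂ f (ball 0 1)
  norm_eq_one : ∀ z : ℂ, ‖z‖ = 1 → ‖f z‖ = 1

namespace IsInnerInDiskAlgebra

variable {f : ℂ → ℂ}

theorem diffContOnCl (hf : IsInnerInDiskAlgebra f) : DiffContOnCl ℂ f (ball 0 1) :=
  ⟨hf.differentiableOn, by rw [closure_ball 0 one_ne_zero]; exact hf.continuousOn⟩

theorem analyticOnNhd (hf : IsInnerInDiskAlgebra f) : AnalyticOnNhd ℂ f (ball 0 1) :=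
  hf.differentiableOn.analyticOnNhd isOpen_ball

theorem norm_le_one (hf : IsInnerInDiskAlgebra f) {z : ℂ} (hz : z ∈ closedBall 0 1) :
    ‖f z‖ ≤ 1 := by
  refine Complex.norm_le_of_forall_mem_frontier_norm_le isBounded_ball hf.diffContOnCl
    (fun w hw => ?_) (by rwa [closure_ball 0 one_ne_zero])
  rw [frontier_ball 0 one_ne_zero, mem_sphere_zero_iff_norm] at hw
  exact (hf.norm_eq_one w hw).le

theorem inv (hf : IsInnerInDiskAlgebra f) (h0 : ∀ z ∈ closedBall (0 : ℂ) 1, f z ≠ 0) :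
    IsInnerInDiskAlgebra f⁻¹ where
  continuousOn := hf.continuousOn.inv₀ h0
  differentiableOn := hf.differentiableOn.inv fun z hz => h0 z (ball_subset_closedBall hz)
  norm_eq_one z hz := by rw [Pi.inv_apply, norm_inv, hf.norm_eq_one z hz, inv_one]

theorem exists_eq_const_of_forall_ne_zero (hf : IsInnerInDiskAlgebra f)
    (h0 : ∀ z ∈ closedBall (0 : ℂ) 1, f z ≠ 0) :
    ∃ c : ℂ, ‖c‖ = 1 ∧ ∀ z ∈ closedBall (0 : ℂ) 1, f z = c := by
  have h0mem : (0 : ℂ) ∈ closedBall (0 : ℂ) 1 := mem_closedBall_self zero_le_one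
  have hf0 : ‖f 0‖ = 1 := by
    refine le_antisymm (hf.norm_le_one h0mem) ?_
    have := (hf.inv h0).norm_le_one h0mem
    rwa [Pi.inv_apply, norm_inv, inv_le_one₀ (norm_pos_iff.2 (h0 0 h0mem))] at this
  have hmax : IsMaxOn (norm ∘ f) (ball 0 1) 0 := fun z hz =>
    (hf0 ▸ hf.norm_le_one (ball_subset_closedBall hz) : ‖f z‖ ≤ ‖f 0‖)
  refine ⟨f 0, hf0, fun z hz => ?_⟩
  refine Complex.eqOn_closure_of_isPreconnected_of_isMaxOn_norm (convex_ball 0 1).isPreconnected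
    isOpen_ball hf.diffContOnCl (mem_ball_self one_pos) hmax ?_
  rwa [closure_ball 0 one_ne_zero]

theorem mem_ball_of_eq_zero (hf : IsInnerInDiskAlgebra f) {z : ℂ} (hz : z ∈ closedBall 0 1)
    (h0 : f z = 0) : z ∈ ball 0 1 := by
  rw [mem_closedBall_zero_iff] at hz
  rw [mem_ball_zero_iff]
  refine hz.lt_of_ne fun h => ?_
  simpa [h0] using hf.norm_eq_one z h

theorem analyticOrderAt_ne_top (hf : IsInnerInDiskAlgebra f) {b : ℂ} (hb : b ∈ ball 0 1) :
    analyticOrderAt f b ≠ ⊤ := by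
  intro htop
  have hball : Set.EqOn f 0 (ball 0 1) :=
    hf.analyticOnNhd.eqOn_zero_of_preconnected_of_eventuallyEq_zero
      (convex_ball 0 1).isPreconnected hb (analyticOrderAt_eq_top.mp htop)
  have hclosed : Set.EqOn f 0 (closedBall 0 1) :=
    hball.of_subset_closure hf.continuousOn continuousOn_const ball_subset_closedBall
      (closure_ball 0 one_ne_zero).ge
  simpa [hclosed (by simp : (1 : ℂ) ∈ closedBall 0 1)] using hf.norm_eq_one 1 norm_one

theorem finite_zeros (hf : IsInnerInDiskAlgebra f) :
    {z ∈ closedBall (0 : ℂ) 1 | f z = 0}.Finite := by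
  set Z := {z ∈ closedBall (0 : ℂ) 1 | f z = 0}
  have hZball : Z ⊆ ball 0 1 := fun z hz => hf.mem_ball_of_eq_zero hz.1 hz.2
  have hZcompact : IsCompact Z :=
    (isCompact_closedBall 0 1).of_isClosed_subset
      (hf.continuousOn.preimage_isClosed_of_isClosed isClosed_closedBall isClosed_singleton)
      (Set.sep_subset _ _)
  have hdiscrete := codiscreteWithin_mono hZball
    hf.analyticOnNhd.codiscreteWithin_setOfPred_analyticOrderAt_eq_zero_or_top
  refine (hZcompact.finite_sdiff_of_mem_codiscreteWithin hdiscrete).subset fun z hz => ⟨hz, ?_⟩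
  rintro (hord | hord)
  · exact analyticOrderAt_ne_zero.2 ⟨hf.analyticOnNhd z (hZball hz), hz.2⟩ hord
  · exact hf.analyticOrderAt_ne_top (hZball hz) hord

theorem blaschkeQuotient (hf : IsInnerInDiskAlgebra f) {a : ℂ} (ha : a ∈ ball 0 1)
    (hfa : f a = 0) : IsInnerInDiskAlgebra (_root_.blaschkeQuotient f a) where
  continuousOn := by
    have hnhds : closedBall (0 : ℂ) 1 ∈ 𝓝 a :=
      mem_of_superset (isOpen_ball.mem_nhds ha) ball_subset_closedBall
    exact (by fun_prop : Continuous fun z : ℂ => 1 - starRingEnd ℂ a * z).continuousOn.mul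
      ((continuousOn_dslope hnhds).mpr
        ⟨hf.continuousOn, (hf.analyticOnNhd a ha).differentiableAt⟩)
  differentiableOn :=
    (by fun_prop : Differentiable ℂ fun z : ℂ => 1 - starRingEnd ℂ a * z).differentiableOn.mul
      ((Complex.differentiableOn_dslope (isOpen_ball.mem_nhds ha)).mpr hf.differentiableOn)
  norm_eq_one z hz := by
    have hza : ‖z - a‖ ≠ 0 := by
      rw [norm_ne_zero_iff, sub_ne_zero]
      rintro rfl
      exact (mem_ball_zero_iff.mp ha).ne hz
    have h := congrArg norm (one_sub_conj_mul_mul_eq_sub_mul_blaschkeQuotient hfa z)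
    rw [norm_mul, norm_mul, norm_one_sub_conj_mul_eq_norm_sub hz, hf.norm_eq_one z hz,
      mul_one] at h
    exact (mul_eq_left₀ hza).mp h.symm

theorem sum_analyticOrderNatAt_eq (hf : IsInnerInDiskAlgebra f) {a : ℂ} {s : Finset ℂ}
    (hs : ↑s ⊆ ball (0 : ℂ) 1) (has : a ∈ s) (hfa : f a = 0) :
    ∑ b ∈ s, analyticOrderNatAt f b =
      ∑ b ∈ s, analyticOrderNatAt (_root_.blaschkeQuotient f a) b + 1 := by
  have hq := hf.blaschkeQuotient (hs has) hfa
  have hpoint : ∀ b ∈ s, analyticOrderNatAt f b =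
      analyticOrderNatAt (· - a) b + analyticOrderNatAt (_root_.blaschkeQuotient f a) b := by
    intro b hb
    refine analyticOrderNatAt_eq_add_of_mul_eq (hf.analyticOnNhd b (hs hb))
      (hq.analyticOnNhd b (hs hb)) (by fun_prop) (by fun_prop) ?_
      (hf.analyticOrderAt_ne_top (hs hb))
      (funext (one_sub_conj_mul_mul_eq_sub_mul_blaschkeQuotient hfa))
    exact one_sub_conj_mul_ne_zero (mem_ball_zero_iff.mp (hs has))
      (mem_ball_zero_iff.mp (hs hb)).le
  rw [Finset.sum_congr rfl hpoint, Finset.sum_add_distrib, sum_analyticOrderNatAt_sub_const has,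
    add_comm]

theorem isFiniteBlaschke_of_zeros_subset (hf : IsInnerInDiskAlgebra f) {s : Finset ℂ}
    (hs : ↑s ⊆ ball (0 : ℂ) 1) (hzeros : ∀ z ∈ closedBall (0 : ℂ) 1, f z = 0 → z ∈ s) :
    IsFiniteBlaschke f := by
  induction hn : ∑ b ∈ s, analyticOrderNatAt f b using Nat.strong_induction_on
    generalizing f with | _ n ih => ?_
  by_cases hzero : ∃ a ∈ closedBall (0 : ℂ) 1, f a = 0
  · obtain ⟨a, ha, hfa⟩ := hzero
    have haball := hf.mem_ball_of_eq_zero ha hfa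
    have hfactor := fun z => eq_blaschkeQuotient_mul_blaschkeFactor (z := z) hfa
      (mem_ball_zero_iff.mp haball)
    refine (ih _ ?_ (hf.blaschkeQuotient haball hfa) (fun z hz hqz => hzeros z hz ?_)
      rfl).of_blaschkeFactor_mul (mem_ball_zero_iff.mp haball) hfactor
    · rw [← hn, hf.sum_analyticOrderNatAt_eq hs (hzeros a ha hfa) hfa]
      exact Nat.lt_succ_self _
    · rw [hfactor z hz, hqz, zero_mul]
  · obtain ⟨c, hc, hfc⟩ :=
      hf.exists_eq_const_of_forall_ne_zero fun z hz hfz => hzero ⟨z, hz, hfz⟩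
    exact ⟨0, c, Fin.elim0, hc, nofun, fun z hz => by simp [hfc z hz]⟩

theorem isFiniteBlaschke (hf : IsInnerInDiskAlgebra f) : IsFiniteBlaschke f :=
  hf.isFiniteBlaschke_of_zeros_subset (s := hf.finite_zeros.toFinset)
    (by rw [Set.Finite.coe_toFinset]; exact fun z hz => hf.mem_ball_of_eq_zero hz.1 hz.2)
    (fun z hz hfz => hf.finite_zeros.mem_toFinset.mpr ⟨hz, hfz⟩)

end IsInnerInDiskAlgebra

/-- A function continuous on the closed unit disk, holomorphic on the open unit disk,
with unimodular boundary values, is a finite Blaschke product. -/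
theorem finite_blaschke_product (f : ℂ → ℂ)
    (hc : ContinuousOn f (Metric.closedBall 0 1))
    (hd : DifferentiableOn ℂ f (Metric.ball 0 1))
    (hb : ∀ z : ℂ, ‖z‖ = 1 → ‖f z‖ = 1) :
    ∃ (d : ℕ) (c : ℂ) (a : Fin d → ℂ), ‖c‖ = 1 ∧ (∀ i, ‖a i‖ < 1) ∧
      ∀ z ∈ Metric.closedBall (0:ℂ) 1,
        f z = c * ∏ i, (z - a i) / (1 - (starRingEnd ℂ) (a i) * z) :=
  (IsInnerInDiskAlgebra.mk hc hd hb).isFiniteBlaschke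
end
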